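/- arXiv:2004.03312 — 2 statements merged into one kernel-verified Lean document; each statement's English description precedes it below -/
import Mathlib

section
/- Let Φ₁,…,Φₙ : B(H) → B(K) be positive linear maps with Σᵢ₌₁ⁿ Φᵢ(1_H) = 1_K, let A₁,…,Aₙ ∈ B(H) be self-adjoint operators whose spectra are contained in an interval J, and let f : J → ℝ be a continuously differentiable convex function. Set η = sup over unit vectors x ∈ K of { ⟨f′(Σᵢ Φᵢ(Aᵢ)) (Σᵢ Φᵢ(Aᵢ)) x, x⟩ − ⟨Σᵢ Φᵢ(Aᵢ) x, x⟩ · ⟨f′(Σᵢ Φᵢ(Aᵢ)) x, x⟩ }. Then f(Σᵢ Φᵢ(Aᵢ)) ≤ Σᵢ Φᵢ(f(Aᵢ)) + η · 1_K. -/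
open scoped ComplexInnerProductSpace

set_option maxHeartbeats 1000000
set_option synthInstance.maxHeartbeats 200000

section AuxHelpers

variable {K : Type*} [NormedAddCommGroup K] [InnerProductSpace ℂ K] [CompleteSpace K]

lemma re_inner_le_of_le' {S R : K →L[ℂ] K} (h : S ≤ R) (x : K) :
    (⟪S x, x⟫).re ≤ (⟪R x, x⟫).re := by
  have h2 := ((ContinuousLinearMap.le_def S R).mp h).2 x
  simp only [ContinuousLinearMap.reApplyInnerSelf, ContinuousLinearMap.sub_apply,
    inner_sub_left, map_sub, RCLike.re_to_complex] at h2
  linarith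

lemma le_of_re_inner_le' {S R : K →L[ℂ] K} (hsa : IsSelfAdjoint (R - S))
    (h : ∀ x, (⟪S x, x⟫).re ≤ (⟪R x, x⟫).re) : S ≤ R := by
  rw [ContinuousLinearMap.le_def]
  refine ⟨ContinuousLinearMap.isSelfAdjoint_iff_isSymmetric.mp hsa, fun x => ?_⟩
  have := h x
  simp only [ContinuousLinearMap.reApplyInnerSelf, ContinuousLinearMap.sub_apply,
    inner_sub_left, map_sub, RCLike.re_to_complex]
  linarith

lemma abs_re_inner_le_norm' (S : K →L[ℂ] K) {x : K} (hx : ‖x‖ = 1) :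
    |(⟪S x, x⟫).re| ≤ ‖S‖ := by
  have h1 : ‖⟪S x, x⟫‖ ≤ ‖S x‖ * ‖x‖ := norm_inner_le_norm _ _
  have h2 : ‖S x‖ ≤ ‖S‖ * ‖x‖ := S.le_opNorm x
  have h3 : |(⟪S x, x⟫).re| ≤ ‖⟪S x, x⟫‖ := Complex.abs_re_le_norm _
  rw [hx] at h1 h2
  simp only [mul_one] at h1 h2
  linarith

lemma re_inner_smul_apply' (r : ℝ) (S : K →L[ℂ] K) (x : K) :
    (⟪(r • S) x, x⟫).re = r * (⟪S x, x⟫).re := by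
  rw [ContinuousLinearMap.smul_apply, RCLike.real_smul_eq_coe_smul (K := ℂ), inner_smul_left]
  simp [Complex.mul_re]

lemma re_inner_one_smul_one' (r : ℝ) (x : K) (hx : ‖x‖ = 1) :
    (⟪(r • (1 : K →L[ℂ] K)) x, x⟫).re = r := by
  have h1 : (⟪x, x⟫).re = 1 := by
    rw [inner_self_eq_norm_sq_to_K, hx]; norm_num
  rw [re_inner_smul_apply', ContinuousLinearMap.one_apply, h1, mul_one]

lemma tangent_line_le' {J : Set ℝ} {f f' : ℝ → ℝ} (hconv : ConvexOn ℝ J f)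
    (hderiv : ∀ t ∈ J, HasDerivWithinAt f (f' t) J t)
    {s t : ℝ} (hs : s ∈ J) (ht : t ∈ J) :
    f s + f' s * (t - s) ≤ f t := by
  rcases lt_trichotomy s t with h | h | h
  · have h1 := hconv.le_slope_of_hasDerivWithinAt hs ht h (hderiv s hs)
    rw [slope_def_field] at h1
    have h2 : 0 < t - s := by linarith
    rw [le_div_iff₀ h2] at h1
    linarith
  · simp [h]
  · have h1 := hconv.slope_le_of_hasDerivWithinAt ht hs h (hderiv s hs)
    rw [slope_def_field] at h1
    have h2 : 0 < s - t := by linarith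
    rw [div_le_iff₀ h2] at h1
    nlinarith

end AuxHelpers

section PosMap

variable {H K : Type*} [NormedAddCommGroup H] [InnerProductSpace ℂ H] [CompleteSpace H]
  [NormedAddCommGroup K] [InnerProductSpace ℂ K] [CompleteSpace K]

lemma posmap_mono' {Φ : (H →L[ℂ] H) →ₗ[ℂ] (K →L[ℂ] K)}
    (hΦ : ∀ T : H →L[ℂ] H, 0 ≤ T → 0 ≤ Φ T) {S R : H →L[ℂ] H} (h : S ≤ R) :
    Φ S ≤ Φ R := by
  have h1 := hΦ (R - S) (sub_nonneg.mpr h)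
  rw [map_sub] at h1
  exact sub_nonneg.mp h1

set_option maxHeartbeats 1000000 in
lemma posmap_isSelfAdjoint' {Φ : (H →L[ℂ] H) →ₗ[ℂ] (K →L[ℂ] K)}
    (hΦ : ∀ T : H →L[ℂ] H, 0 ≤ T → 0 ≤ Φ T) {S : H →L[ℂ] H}
    (hS : IsSelfAdjoint S) : IsSelfAdjoint (Φ S) := by
  have h1 : (0 : H →L[ℂ] H) ≤ S + ‖S‖ • 1 := by
    have h2 : -S ≤ algebraMap ℝ (H →L[ℂ] H) ‖-S‖ := IsSelfAdjoint.le_algebraMap_norm_self hS.neg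
    rw [norm_neg, Algebra.algebraMap_eq_smul_one] at h2
    have := neg_le_iff_add_nonneg.mp h2
    rwa [add_comm] at this
  have h3 : IsSelfAdjoint (Φ (S + ‖S‖ • 1)) :=
    (ContinuousLinearMap.nonneg_iff_isPositive _ |>.mp (hΦ _ h1)).isSelfAdjoint
  have h4 : IsSelfAdjoint (Φ 1) :=
    (ContinuousLinearMap.nonneg_iff_isPositive _ |>.mp
      (hΦ 1 ((ContinuousLinearMap.nonneg_iff_isPositive _).mpr ContinuousLinearMap.isPositive_one))).isSelfAdjoint
  have h5 : Φ S = Φ (S + ‖S‖ • 1) - ‖S‖ • Φ 1 := by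
    rw [map_add, LinearMap.map_smul_of_tower]
    abel
  rw [h5]
  have h6 : IsSelfAdjoint (‖S‖ • Φ 1) := by
    rw [IsSelfAdjoint, star_smul, star_trivial, h4.star_eq]
  exact h3.sub h6

lemma cfc_affine' (c d : ℝ) (a : H →L[ℂ] H) (ha : IsSelfAdjoint a) :
    cfc (fun t : ℝ => c + d * t) a = c • 1 + d • a := by
  have h1 : cfc (fun t : ℝ => c + d * t) a
      = cfc (fun _ : ℝ => c) a + cfc (fun t : ℝ => d * t) a := by
    rw [← cfc_add a (fun _ : ℝ => c) (fun t : ℝ => d * t) (by fun_prop) (by fun_prop)]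
  rw [h1, cfc_const c a ha, cfc_const_mul_id d a ha, Algebra.algebraMap_eq_smul_one]

end PosMap

/-- **Corollary 2.3.** Convex version of the Hansen–Pedersen inequality:
`f(Σ Φᵢ(Aᵢ)) ≤ Σ Φᵢ(f(Aᵢ)) + η·1`. -/
theorem stmt_3
    {H K : Type*} [NormedAddCommGroup H] [InnerProductSpace ℂ H] [CompleteSpace H]
    [NormedAddCommGroup K] [InnerProductSpace ℂ K] [CompleteSpace K]
    (n : ℕ) (Φ : Fin n → (H →L[ℂ] H) →ₗ[ℂ] (K →L[ℂ] K))
    (hΦpos : ∀ i, ∀ T : H →L[ℂ] H, 0 ≤ T → 0 ≤ Φ i T)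
    (hΦunital : ∑ i, Φ i 1 = 1)
    (A : Fin n → H →L[ℂ] H)
    (hA : ∀ i, IsSelfAdjoint (A i))
    (J : Set ℝ)
    (hAspec : ∀ i, spectrum ℝ (A i) ⊆ J)
    (f f' : ℝ → ℝ) (hconv : ConvexOn ℝ J f)
    (hderiv : ∀ t ∈ J, HasDerivWithinAt f (f' t) J t) (hf'cont : ContinuousOn f' J)
    (η : ℝ)
    (hη : η = sSup {c : ℝ | ∃ x : K, ‖x‖ = 1 ∧
      c = (⟪((cfc f' (∑ i, Φ i (A i))) * (∑ i, Φ i (A i))) x, x⟫).re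
        - (⟪(∑ i, Φ i (A i)) x, x⟫).re * (⟪(cfc f' (∑ i, Φ i (A i))) x, x⟫).re}) :
    cfc f (∑ i, Φ i (A i)) ≤ (∑ i, Φ i (cfc f (A i))) + η • (1 : K →L[ℂ] K) := by
  rcases subsingleton_or_nontrivial (K →L[ℂ] K) with hK | hK
  · exact le_of_eq (Subsingleton.elim _ _)
  rcases subsingleton_or_nontrivial (H →L[ℂ] H) with hH | hH
  · exfalso
    have h1 : (1 : H →L[ℂ] H) = 0 := Subsingleton.elim _ _
    rw [h1] at hΦunital
    simp only [map_zero, Finset.sum_const_zero] at hΦunital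
    exact zero_ne_one hΦunital
  haveI hn : Nonempty (Fin n) := by
    rcases Nat.eq_zero_or_pos n with h | h
    · exfalso
      subst h
      rw [Finset.univ_eq_empty, Finset.sum_empty] at hΦunital
      exact zero_ne_one hΦunital
    · exact ⟨⟨0, h⟩⟩
  set T : K →L[ℂ] K := ∑ i, Φ i (A i) with hT
  set F : K →L[ℂ] K := ∑ i, Φ i (cfc f (A i)) with hF
  have hJconv : Convex ℝ J := hconv.1
  have hfJ : ContinuousOn f J := fun t ht => (hderiv t ht).continuousWithinAt
  -- spectra are nonempty and compact
  have hspecne : ∀ i, (spectrum ℝ (A i)).Nonempty := fun i => (hA i).spectrum_nonempty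
  have hcpt : ∀ i, IsCompact (spectrum ℝ (A i)) := fun i => spectrum.isCompact (A i)
  -- define the interval [a, b]
  obtain ⟨i₀, -, ha_eq⟩ := Finset.exists_mem_eq_inf' (Finset.univ_nonempty (α := Fin n))
    (fun i => sInf (spectrum ℝ (A i)))
  obtain ⟨i₁, -, hb_eq⟩ := Finset.exists_mem_eq_sup' (Finset.univ_nonempty (α := Fin n))
    (fun i => sSup (spectrum ℝ (A i)))
  set a : ℝ := Finset.univ.inf' (Finset.univ_nonempty) (fun i => sInf (spectrum ℝ (A i))) with ha
  set b : ℝ := Finset.univ.sup' (Finset.univ_nonempty) (fun i => sSup (spectrum ℝ (A i))) with hb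
  have haJ : a ∈ J := by
    rw [ha_eq]
    exact hAspec i₀ ((hcpt i₀).sInf_mem (hspecne i₀))
  have hbJ : b ∈ J := by
    rw [hb_eq]
    exact hAspec i₁ ((hcpt i₁).sSup_mem (hspecne i₁))
  have hIccJ : Set.Icc a b ⊆ J := hJconv.ordConnected.out haJ hbJ
  have hab_i : ∀ i, spectrum ℝ (A i) ⊆ Set.Icc a b := by
    intro i t ht
    constructor
    · rw [ha]
      exact le_trans (Finset.inf'_le _ (Finset.mem_univ i)) (csInf_le (hcpt i).bddBelow ht)
    · rw [hb]
      exact le_trans (le_csSup (hcpt i).bddAbove ht) (Finset.le_sup' (fun j => sSup (spectrum ℝ (A j))) (Finset.mem_univ i))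
  -- operator bounds a•1 ≤ A i ≤ b•1
  have ha1 : ∀ i, a • (1 : H →L[ℂ] H) ≤ A i := by
    intro i
    have := algebraMap_le_of_le_spectrum (R := ℝ) (fun t ht => (hab_i i ht).1) (hA i)
    rwa [Algebra.algebraMap_eq_smul_one] at this
  have hb1 : ∀ i, A i ≤ b • (1 : H →L[ℂ] H) := by
    intro i
    have := le_algebraMap_of_spectrum_le (R := ℝ) (fun t ht => (hab_i i ht).2) (hA i)
    rwa [Algebra.algebraMap_eq_smul_one] at this
  -- transfer to T
  have hsum_smul : ∀ r : ℝ, ∑ i, Φ i (r • (1 : H →L[ℂ] H)) = r • (1 : K →L[ℂ] K) := by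
    intro r
    calc ∑ i, Φ i (r • (1 : H →L[ℂ] H)) = ∑ i, r • Φ i 1 := by
          simp only [LinearMap.map_smul_of_tower]
      _ = r • (1 : K →L[ℂ] K) := by rw [← Finset.smul_sum, hΦunital]
  have haT : a • (1 : K →L[ℂ] K) ≤ T := by
    rw [← hsum_smul a, hT]
    exact Finset.sum_le_sum fun i _ => posmap_mono' (hΦpos i) (ha1 i)
  have hTb : T ≤ b • (1 : K →L[ℂ] K) := by
    rw [← hsum_smul b, hT]
    exact Finset.sum_le_sum fun i _ => posmap_mono' (hΦpos i) (hb1 i)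
  have hTsa : IsSelfAdjoint T := by
    rw [hT, IsSelfAdjoint, star_sum]
    exact Finset.sum_congr rfl fun i _ => (posmap_isSelfAdjoint' (hΦpos i) (hA i)).star_eq
  have hTspec : spectrum ℝ T ⊆ Set.Icc a b := by
    intro t ht
    constructor
    · have h1 : algebraMap ℝ (K →L[ℂ] K) a ≤ T := by
        rwa [Algebra.algebraMap_eq_smul_one]
      exact (algebraMap_le_iff_le_spectrum (a := T) hTsa).mp h1 t ht
    · have h1 : T ≤ algebraMap ℝ (K →L[ℂ] K) b := by
        rwa [Algebra.algebraMap_eq_smul_one]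
      exact (le_algebraMap_iff_spectrum_le (a := T) hTsa).mp h1 t ht
  have hTJ : spectrum ℝ T ⊆ J := fun t ht => hIccJ (hTspec ht)
  have hFsa : IsSelfAdjoint F := by
    rw [hF, IsSelfAdjoint, star_sum]
    exact Finset.sum_congr rfl fun i _ =>
      (posmap_isSelfAdjoint' (hΦpos i) (cfc_predicate f (A i))).star_eq
  -- boundedness of the set defining η
  set S : Set ℝ := {c : ℝ | ∃ x : K, ‖x‖ = 1 ∧
      c = (⟪((cfc f' T) * T) x, x⟫).re
        - (⟪T x, x⟫).re * (⟪(cfc f' T) x, x⟫).re} with hS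
  have hbdd : BddAbove S := by
    refine ⟨‖cfc f' T * T‖ + ‖T‖ * ‖cfc f' T‖, ?_⟩
    rintro c ⟨x, hx, rfl⟩
    have h1 := abs_re_inner_le_norm' (cfc f' T * T) hx
    have h2 := abs_re_inner_le_norm' T hx
    have h3 := abs_re_inner_le_norm' (cfc f' T) hx
    have h4 : |(⟪T x, x⟫).re * (⟪cfc f' T x, x⟫).re| ≤ ‖T‖ * ‖cfc f' T‖ := by
      rw [abs_mul]
      exact mul_le_mul h2 h3 (abs_nonneg _) (norm_nonneg _)
    have h5 := (abs_le.mp h1).2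
    have h6 := (abs_le.mp h4).1
    linarith
  -- the pointwise (unit-vector) inequality
  have claim : ∀ u : K, ‖u‖ = 1 →
      (⟪(cfc f T) u, u⟫).re ≤ (⟪(F + η • (1 : K →L[ℂ] K)) u, u⟫).re := by
    intro u hu
    set μ : ℝ := (⟪T u, u⟫).re with hμ
    have hμa : a ≤ μ := by
      have h1 := re_inner_le_of_le' haT u
      rwa [re_inner_one_smul_one' a u hu] at h1
    have hμb : μ ≤ b := by
      have h1 := re_inner_le_of_le' hTb u
      rwa [re_inner_one_smul_one' b u hu] at h1
    have hμJ : μ ∈ J := hIccJ ⟨hμa, hμb⟩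
    -- Step A : f μ ≤ ⟪F u, u⟫.re
    have hopA : ∀ i, (f μ - f' μ * μ) • (1 : H →L[ℂ] H) + f' μ • (A i) ≤ cfc f (A i) := by
      intro i
      have h1 : cfc (fun t : ℝ => (f μ - f' μ * μ) + f' μ * t) (A i) ≤ cfc f (A i) := by
        refine cfc_mono (fun t ht => ?_) (by fun_prop) (hfJ.mono (hAspec i))
        have := tangent_line_le' hconv hderiv hμJ (hAspec i ht)
        linarith
      rwa [cfc_affine' _ _ _ (hA i)] at h1
    have hA2 : (f μ - f' μ * μ) • (1 : K →L[ℂ] K) + f' μ • T ≤ F := by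
      have h1 : ∑ i, Φ i ((f μ - f' μ * μ) • (1 : H →L[ℂ] H) + f' μ • (A i)) ≤ F := by
        rw [hF]
        exact Finset.sum_le_sum fun i _ => posmap_mono' (hΦpos i) (hopA i)
      calc (f μ - f' μ * μ) • (1 : K →L[ℂ] K) + f' μ • T
          = ∑ i, Φ i ((f μ - f' μ * μ) • (1 : H →L[ℂ] H) + f' μ • (A i)) := by
            simp only [map_add, LinearMap.map_smul_of_tower, Finset.sum_add_distrib,
              ← Finset.smul_sum, hΦunital, hT]
        _ ≤ F := h1
    have hstepA : f μ ≤ (⟪F u, u⟫).re := by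
      have h1 := re_inner_le_of_le' hA2 u
      have h2 : (⟪((f μ - f' μ * μ) • (1 : K →L[ℂ] K) + f' μ • T) u, u⟫).re
          = (f μ - f' μ * μ) + f' μ * μ := by
        rw [ContinuousLinearMap.add_apply, inner_add_left, Complex.add_re,
          re_inner_one_smul_one' _ u hu, re_inner_smul_apply', ← hμ]
      rw [h2] at h1
      linarith
    -- Step B : ⟪cfc f T u, u⟫.re ≤ f μ + η
    have hcfcB : cfc (fun t : ℝ => f μ + (f' t * t - μ * f' t)) T
        = (f μ) • (1 : K →L[ℂ] K) + (cfc f' T * T - μ • cfc f' T) := by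
      have hc1 : ContinuousOn (fun t : ℝ => f' t * t - μ * f' t) (spectrum ℝ T) := by
        have := hf'cont.mono hTJ
        fun_prop
      have hc2 : ContinuousOn f' (spectrum ℝ T) := hf'cont.mono hTJ
      rw [cfc_add T (fun _ : ℝ => f μ) (fun t : ℝ => f' t * t - μ * f' t)
        (by fun_prop) hc1]
      congr 1
      · rw [cfc_const (f μ) T hTsa, Algebra.algebraMap_eq_smul_one]
      · rw [cfc_sub (fun t : ℝ => f' t * t) (fun t : ℝ => μ * f' t) T (by fun_prop)
          (by fun_prop)]
        congr 1
        · rw [cfc_mul f' (fun t : ℝ => t) T hc2 (by fun_prop), cfc_id' ℝ T hTsa]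
        · rw [cfc_const_mul μ f' T hc2]
    have hopB : cfc f T ≤ (f μ) • (1 : K →L[ℂ] K) + (cfc f' T * T - μ • cfc f' T) := by
      rw [← hcfcB]
      have hc2 : ContinuousOn f' (spectrum ℝ T) := hf'cont.mono hTJ
      refine cfc_mono (fun t ht => ?_) (hfJ.mono hTJ) (by fun_prop)
      have := tangent_line_le' hconv hderiv (hTJ ht) hμJ
      linarith
    have hq : (⟪(cfc f' T * T) u, u⟫).re - (⟪T u, u⟫).re * (⟪cfc f' T u, u⟫).re ≤ η := by
      rw [hη]
      exact le_csSup hbdd ⟨u, hu, rfl⟩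
    have hstepB : (⟪(cfc f T) u, u⟫).re ≤ f μ + η := by
      have h1 := re_inner_le_of_le' hopB u
      have h2 : (⟪((f μ) • (1 : K →L[ℂ] K) + (cfc f' T * T - μ • cfc f' T)) u, u⟫).re
          = f μ + ((⟪(cfc f' T * T) u, u⟫).re - μ * (⟪cfc f' T u, u⟫).re) := by
        rw [ContinuousLinearMap.add_apply, inner_add_left, Complex.add_re,
          re_inner_one_smul_one' _ u hu, ContinuousLinearMap.sub_apply, inner_sub_left,
          Complex.sub_re, re_inner_smul_apply']
      rw [h2] at h1
      rw [hμ] at *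
      linarith
    -- combine
    have h3 : (⟪(F + η • (1 : K →L[ℂ] K)) u, u⟫).re = (⟪F u, u⟫).re + η := by
      rw [ContinuousLinearMap.add_apply, inner_add_left, Complex.add_re,
        re_inner_one_smul_one' _ u hu]
    rw [h3]
    linarith
  -- conclude via the Loewner order characterization
  refine le_of_re_inner_le' ?_ ?_
  · have hη1 : IsSelfAdjoint (η • (1 : K →L[ℂ] K)) := by
      rw [IsSelfAdjoint, star_smul, star_trivial, star_one]
    exact (hFsa.add hη1).sub (cfc_predicate f T)
  · intro x
    by_cases hx0 : x = 0
    · simp [hx0]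
    · have hxn : ‖x‖ ≠ 0 := norm_ne_zero_iff.mpr hx0
      set c : ℝ := ‖x‖ with hc
      set u : K := (c⁻¹ : ℝ) • x with hud
      have hu : ‖u‖ = 1 := by
        rw [hud, norm_smul, norm_inv, Real.norm_eq_abs, abs_of_nonneg (norm_nonneg x),
          ← hc, inv_mul_cancel₀ hxn]
      have hxu : x = c • u := by
        rw [hud, smul_smul, mul_inv_cancel₀ hxn, one_smul]
      have hscale : ∀ W : K →L[ℂ] K, (⟪W x, x⟫).re = c ^ 2 * (⟪W u, u⟫).re := by
        intro W
        rw [hxu, ContinuousLinearMap.map_smul_of_tower, RCLike.real_smul_eq_coe_smul (K := ℂ) c (W u),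
          RCLike.real_smul_eq_coe_smul (K := ℂ) c u, inner_smul_left, inner_smul_right]
        simp [Complex.mul_re]
        ring
      rw [hscale, hscale]
      exact mul_le_mul_of_nonneg_left (claim u hu) (by positivity)
end

section
/- Let Φ₁,…,Φₙ : B(H) → B(K) be positive linear maps with Σᵢ₌₁ⁿ Φᵢ(1_H) = 1_K, let A₁,…,Aₙ ∈ B(H) be self-adjoint operators whose spectra are contained in an interval J, and let f : J → ℝ be a continuously differentiable convex function. Set ϑ = sup over unit vectors x ∈ K of { ⟨Σᵢ Φᵢ(f′(Aᵢ)·Aᵢ) x, x⟩ − ⟨Σᵢ Φᵢ(f′(Aᵢ)) x, x⟩ · ⟨Σᵢ Φᵢ(Aᵢ) x, x⟩ }. Then Σᵢ Φᵢ(f(Aᵢ)) ≤ f(Σᵢ Φᵢ(Aᵢ)) + ϑ · 1_K. -/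
open scoped ComplexInnerProductSpace

section Aux

variable {H K : Type*} [NormedAddCommGroup H] [InnerProductSpace ℂ H] [CompleteSpace H]
  [NormedAddCommGroup K] [InnerProductSpace ℂ K] [CompleteSpace K]

lemma aux_tangent {J : Set ℝ} {f f' : ℝ → ℝ} (hconv : ConvexOn ℝ J f)
    (hderiv : ∀ t ∈ J, HasDerivWithinAt f (f' t) J t)
    {s t : ℝ} (hs : s ∈ J) (ht : t ∈ J) : f' s * (t - s) ≤ f t - f s := by
  rcases lt_trichotomy s t with h | h | h
  · have h1 := hconv.le_slope_of_hasDerivWithinAt hs ht h (hderiv s hs)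
    rw [slope_def_field] at h1
    have h' : 0 < t - s := sub_pos.mpr h
    have h2 := mul_le_mul_of_nonneg_right h1 h'.le
    rwa [div_mul_cancel₀ _ h'.ne'] at h2
  · subst h; simp
  · have h1 := hconv.slope_le_of_hasDerivWithinAt ht hs h (hderiv s hs)
    rw [slope_def_field] at h1
    have h' : 0 < s - t := sub_pos.mpr h
    have h2 := mul_le_mul_of_nonneg_right h1 h'.le
    rw [div_mul_cancel₀ _ h'.ne'] at h2
    nlinarith

lemma aux_pos_selfAdjoint (Φ : (H →L[ℂ] H) →ₗ[ℂ] (K →L[ℂ] K))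
    (hΦpos : ∀ T : H →L[ℂ] H, 0 ≤ T → 0 ≤ Φ T)
    {T : H →L[ℂ] H} (hT : IsSelfAdjoint T) : IsSelfAdjoint (Φ T) := by
  set M : H →L[ℂ] H := algebraMap ℝ _ ‖T‖ with hM
  have h1 : (0 : H →L[ℂ] H) ≤ M - T := sub_nonneg.mpr hT.le_algebraMap_norm_self
  have h2 : (0 : H →L[ℂ] H) ≤ M + T := by
    have := hT.neg_algebraMap_norm_le_self
    rw [← hM] at this
    have h3 := sub_nonneg.mpr this
    rwa [sub_neg_eq_add, add_comm] at h3
  have hP : IsSelfAdjoint (Φ (M + T)) :=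
    ((ContinuousLinearMap.nonneg_iff_isPositive _).mp (hΦpos _ h2)).isSelfAdjoint
  have hQ : IsSelfAdjoint (Φ (M - T)) :=
    ((ContinuousLinearMap.nonneg_iff_isPositive _).mp (hΦpos _ h1)).isSelfAdjoint
  have hsum : Φ T + Φ T = Φ (M + T) - Φ (M - T) := by
    rw [← map_sub, show M + T - (M - T) = T + T by abel, map_add]
  have hsa : IsSelfAdjoint (Φ T + Φ T) := hsum ▸ hP.sub hQ
  rw [IsSelfAdjoint, star_add] at hsa
  have h4 : (2 : ℝ) • star (Φ T) = (2 : ℝ) • Φ T := by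
    rw [two_smul, two_smul]; exact hsa
  exact smul_right_injective _ (by norm_num : (2 : ℝ) ≠ 0) h4

lemma aux_pos_mono (Φ : (H →L[ℂ] H) →ₗ[ℂ] (K →L[ℂ] K))
    (hΦpos : ∀ T : H →L[ℂ] H, 0 ≤ T → 0 ≤ Φ T)
    {X Y : H →L[ℂ] H} (h : X ≤ Y) : Φ X ≤ Φ Y := by
  have := hΦpos (Y - X) (sub_nonneg.mpr h)
  rw [map_sub] at this
  exact sub_nonneg.mp this

lemma aux_inner_le {X Z : K →L[ℂ] K} (h : X ≤ Z) (x : K) :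
    (⟪X x, x⟫).re ≤ (⟪Z x, x⟫).re := by
  have h' := ((ContinuousLinearMap.le_def X Z).mp h).2 x
  rw [ContinuousLinearMap.reApplyInnerSelf_apply] at h'
  simp only [ContinuousLinearMap.sub_apply, inner_sub_left, RCLike.re_to_complex,
    Complex.sub_re] at h'
  linarith

lemma aux_unit_pos {T : K →L[ℂ] K} (hT : IsSelfAdjoint T)
    (h : ∀ x : K, ‖x‖ = 1 → 0 ≤ (⟪T x, x⟫).re) : 0 ≤ T := by
  rw [ContinuousLinearMap.nonneg_iff_isPositive]
  refine ⟨ContinuousLinearMap.isSelfAdjoint_iff_isSymmetric.mp hT, fun x => ?_⟩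
  rw [ContinuousLinearMap.reApplyInnerSelf_apply, RCLike.re_to_complex]
  rcases eq_or_ne x 0 with rfl | hx
  · simp
  · have hnx : ‖x‖ ≠ 0 := norm_ne_zero_iff.mpr hx
    set u : K := ‖x‖⁻¹ • x with hu
    have hu1 : ‖u‖ = 1 := by
      rw [hu, norm_smul]
      simp [hnx]
    have hpos := h u hu1
    have hx' : x = ((‖x‖ : ℂ)) • u := by
      rw [hu]
      rw [show ((‖x‖ : ℂ)) • (‖x‖⁻¹ • x) = (‖x‖ • ‖x‖⁻¹ • x : K) from by
        rw [Complex.coe_smul]]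
      rw [smul_smul, mul_inv_cancel₀ hnx, one_smul]
    have : ⟪T x, x⟫ = (‖x‖ : ℂ) * ((starRingEnd ℂ) (‖x‖ : ℂ)) * ⟪T u, u⟫ := by
      conv_lhs => rw [hx', map_smul, inner_smul_left, inner_smul_right]
      ring
    rw [this]
    simp only [Complex.conj_ofReal, ← Complex.ofReal_mul, Complex.re_ofReal_mul]
    positivity

omit [CompleteSpace K] in
lemma aux_re_abs_le {T : K →L[ℂ] K} {x : K} (hx : ‖x‖ = 1) :
    |(⟪T x, x⟫).re| ≤ ‖T‖ := by
  calc |(⟪T x, x⟫).re| ≤ ‖⟪T x, x⟫‖ := Complex.abs_re_le_norm _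
    _ ≤ ‖T x‖ * ‖x‖ := by exact norm_inner_le_norm _ _
    _ ≤ ‖T‖ * ‖x‖ * ‖x‖ := by
        have := T.le_opNorm x
        nlinarith [norm_nonneg (T x), norm_nonneg x]
    _ = ‖T‖ := by rw [hx]; ring

end Aux
set_option linter.unusedSectionVars false
section Aux2

variable {K : Type*} [NormedAddCommGroup K] [InnerProductSpace ℂ K] [CompleteSpace K]

/-- The real quadratic form of an operator at a vector. -/
noncomputable def qf (T : K →L[ℂ] K) (x : K) : ℝ := (⟪T x, x⟫).re

lemma qf_add (T S : K →L[ℂ] K) (x : K) : qf (T + S) x = qf T x + qf S x := by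
  simp [qf, ContinuousLinearMap.add_apply, inner_add_left]

lemma qf_sub (T S : K →L[ℂ] K) (x : K) : qf (T - S) x = qf T x - qf S x := by
  simp [qf, ContinuousLinearMap.sub_apply, inner_sub_left]

lemma qf_smul (r : ℝ) (T : K →L[ℂ] K) (x : K) : qf (r • T) x = r * qf T x := by
  simp only [qf, ContinuousLinearMap.smul_apply]
  rw [← Complex.coe_smul, inner_smul_left]
  simp [Complex.re_ofReal_mul]

lemma qf_one {x : K} (hx : ‖x‖ = 1) : qf (1 : K →L[ℂ] K) x = 1 := by
  simp only [qf, ContinuousLinearMap.one_apply]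
  rw [inner_self_eq_norm_sq_to_K, hx]
  norm_num

lemma qf_alg {x : K} (hx : ‖x‖ = 1) (r : ℝ) : qf (algebraMap ℝ (K →L[ℂ] K) r) x = r := by
  rw [Algebra.algebraMap_eq_smul_one, qf_smul, qf_one hx, mul_one]

lemma qf_mono {X Z : K →L[ℂ] K} (h : X ≤ Z) (x : K) : qf X x ≤ qf Z x :=
  aux_inner_le h x

lemma qf_abs_le {T : K →L[ℂ] K} {x : K} (hx : ‖x‖ = 1) : |qf T x| ≤ ‖T‖ :=
  aux_re_abs_le hx

end Aux2
set_option maxHeartbeats 1000000 in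
/-- Reverse of the Hansen–Pedersen inequality:
`Σ Φᵢ(f(Aᵢ)) ≤ f(Σ Φᵢ(Aᵢ)) + ϑ·1`. -/
theorem stmt_6
    {H K : Type*} [NormedAddCommGroup H] [InnerProductSpace ℂ H] [CompleteSpace H]
    [NormedAddCommGroup K] [InnerProductSpace ℂ K] [CompleteSpace K]
    (n : ℕ) (Φ : Fin n → (H →L[ℂ] H) →ₗ[ℂ] (K →L[ℂ] K))
    (hΦpos : ∀ i, ∀ T : H →L[ℂ] H, 0 ≤ T → 0 ≤ Φ i T)
    (hΦunital : ∑ i, Φ i 1 = 1)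
    (A : Fin n → H →L[ℂ] H)
    (hA : ∀ i, IsSelfAdjoint (A i))
    (J : Set ℝ)
    (hAspec : ∀ i, spectrum ℝ (A i) ⊆ J)
    (f f' : ℝ → ℝ) (hconv : ConvexOn ℝ J f)
    (hderiv : ∀ t ∈ J, HasDerivWithinAt f (f' t) J t) (hf'cont : ContinuousOn f' J)
    (ϑ : ℝ)
    (hϑ : ϑ = sSup {c : ℝ | ∃ x : K, ‖x‖ = 1 ∧
      c = (⟪(∑ i, Φ i ((cfc f' (A i)) * (A i))) x, x⟫).re
        - (⟪(∑ i, Φ i (cfc f' (A i))) x, x⟫).re * (⟪(∑ i, Φ i (A i)) x, x⟫).re}) :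
    (∑ i, Φ i (cfc f (A i))) ≤ cfc f (∑ i, Φ i (A i)) + ϑ • (1 : K →L[ℂ] K) := by
  classical
  by_cases htriv : Subsingleton (K →L[ℂ] K)
  · exact le_of_eq (Subsingleton.elim _ _)
  rw [not_subsingleton_iff_nontrivial] at htriv
  have hone : (1 : K →L[ℂ] K) ≠ 0 := one_ne_zero
  have hn : 0 < n := by
    rcases Nat.eq_zero_or_pos n with rfl | h
    · exfalso; apply hone; rw [← hΦunital]; simp
    · exact h
  have : NeZero n := ⟨hn.ne'⟩
  have hHnt : Nontrivial (H →L[ℂ] H) := by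
    by_contra h
    rw [not_nontrivial_iff_subsingleton] at h
    apply hone
    rw [← hΦunital, Finset.sum_congr rfl
      (fun i _ => by rw [Subsingleton.elim (1 : H →L[ℂ] H) 0, map_zero])]
    simp
  -- abbreviations
  set B : K →L[ℂ] K := ∑ i, Φ i (A i) with hB
  set C : K →L[ℂ] K := ∑ i, Φ i ((cfc f' (A i)) * (A i)) with hC
  set D : K →L[ℂ] K := ∑ i, Φ i (cfc f' (A i)) with hD
  set X : K →L[ℂ] K := ∑ i, Φ i (cfc f (A i)) with hX
  have hfc : ContinuousOn f J := fun t ht => (hderiv t ht).continuousWithinAt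
  -- spectra of the `A i`
  have hspec_ne : ∀ i, (spectrum ℝ (A i)).Nonempty := fun i => (hA i).spectrum_nonempty
  have hspec_cpt : ∀ i, IsCompact (spectrum ℝ (A i)) :=
    fun i => isCompact_iff_compactSpace.mpr inferInstance
  have huniv : (Finset.univ : Finset (Fin n)).Nonempty := Finset.univ_nonempty
  set a : ℝ := Finset.univ.inf' huniv fun i => sInf (spectrum ℝ (A i)) with ha
  set b : ℝ := Finset.univ.sup' huniv fun i => sSup (spectrum ℝ (A i)) with hb
  have hsa : ∀ i, ∀ s ∈ spectrum ℝ (A i), a ≤ s := fun i s hs =>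
    le_trans (Finset.inf'_le _ (Finset.mem_univ i)) (csInf_le (hspec_cpt i).bddBelow hs)
  have hsb : ∀ i, ∀ s ∈ spectrum ℝ (A i), s ≤ b := fun i s hs =>
    le_trans (le_csSup (hspec_cpt i).bddAbove hs)
      (Finset.le_sup' (fun j => sSup (spectrum ℝ (A j))) (Finset.mem_univ i))
  have haJ : a ∈ J := by
    obtain ⟨i, -, hi⟩ := Finset.exists_mem_eq_inf' huniv fun i => sInf (spectrum ℝ (A i))
    rw [ha, hi]
    exact hAspec i ((hspec_cpt i).sInf_mem (hspec_ne i))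
  have hbJ : b ∈ J := by
    obtain ⟨i, -, hi⟩ := Finset.exists_mem_eq_sup' huniv fun i => sSup (spectrum ℝ (A i))
    rw [hb, hi]
    exact hAspec i ((hspec_cpt i).sSup_mem (hspec_ne i))
  have hIcc : Set.Icc a b ⊆ J := hconv.1.ordConnected.out haJ hbJ
  -- operator bounds for the `A i`
  have hAi_le : ∀ i, A i ≤ algebraMap ℝ _ b := fun i =>
    le_algebraMap_of_spectrum_le (hsb i) (hA i)
  have hle_Ai : ∀ i, algebraMap ℝ _ a ≤ A i := fun i =>
    (algebraMap_le_iff_le_spectrum (hA i)).mpr (hsa i)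
  -- `Φ i` applied to real scalars
  have hΦalg : ∀ i (r : ℝ), Φ i (algebraMap ℝ _ r) = algebraMap ℝ ℂ r • Φ i 1 := by
    intro i r
    rw [Algebra.algebraMap_eq_smul_one, ← algebraMap_smul ℂ r (1 : H →L[ℂ] H), map_smul]
  have hΦsmul : ∀ i (r : ℝ) (T : H →L[ℂ] H), Φ i (r • T) = algebraMap ℝ ℂ r • Φ i T := by
    intro i r T
    rw [← algebraMap_smul ℂ r T, map_smul]
  have hsumalg : ∀ r : ℝ, ∑ i, Φ i (algebraMap ℝ (H →L[ℂ] H) r) = algebraMap ℝ _ r := by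
    intro r
    rw [Finset.sum_congr rfl fun i _ => hΦalg i r, ← Finset.smul_sum, hΦunital,
      algebraMap_smul, Algebra.algebraMap_eq_smul_one]
  -- bounds for `B`
  have hB_ub : B ≤ algebraMap ℝ _ b := by
    calc B ≤ ∑ i, Φ i (algebraMap ℝ _ b) :=
          Finset.sum_le_sum fun i _ => aux_pos_mono (Φ i) (hΦpos i) (hAi_le i)
      _ = algebraMap ℝ _ b := hsumalg b
  have hB_lb : algebraMap ℝ _ a ≤ B := by
    calc algebraMap ℝ (K →L[ℂ] K) a = ∑ i, Φ i (algebraMap ℝ _ a) := (hsumalg a).symm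
      _ ≤ B := Finset.sum_le_sum fun i _ => aux_pos_mono (Φ i) (hΦpos i) (hle_Ai i)
  have hBsa : IsSelfAdjoint B := by
    rw [IsSelfAdjoint, star_sum]
    exact Finset.sum_congr rfl fun i _ => (aux_pos_selfAdjoint (Φ i) (hΦpos i) (hA i)).star_eq
  have hBspec : spectrum ℝ B ⊆ Set.Icc a b := fun s hs =>
    ⟨(algebraMap_le_iff_le_spectrum hBsa).mp hB_lb s hs,
      (le_algebraMap_iff_spectrum_le hBsa).mp hB_ub s hs⟩
  have hBspecJ : spectrum ℝ B ⊆ J := hBspec.trans hIcc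
  -- selfadjointness
  have hXsa : IsSelfAdjoint X := by
    rw [IsSelfAdjoint, star_sum]
    exact Finset.sum_congr rfl fun i _ =>
      (aux_pos_selfAdjoint (Φ i) (hΦpos i) (cfc_predicate f (A i))).star_eq
  have hYsa : IsSelfAdjoint (cfc f B) := cfc_predicate f B
  have hθsa : IsSelfAdjoint (ϑ • (1 : K →L[ℂ] K)) := by
    rw [show ϑ • (1 : K →L[ℂ] K) = algebraMap ℝ _ ϑ from (Algebra.algebraMap_eq_smul_one ϑ).symm,
      isSelfAdjoint_iff, ← algebraMap_star_comm]
    simp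
  -- the set defining ϑ is bounded above
  have hbdd : BddAbove {c : ℝ | ∃ x : K, ‖x‖ = 1 ∧
      c = (⟪C x, x⟫).re - (⟪D x, x⟫).re * (⟪B x, x⟫).re} := by
    refine ⟨‖C‖ + ‖D‖ * ‖B‖, ?_⟩
    rintro c ⟨x, hx, rfl⟩
    have h1 := abs_le.mp (aux_re_abs_le (T := C) hx)
    have h4 : |(⟪D x, x⟫).re * (⟪B x, x⟫).re| ≤ ‖D‖ * ‖B‖ := by
      rw [abs_mul]
      exact mul_le_mul (aux_re_abs_le hx) (aux_re_abs_le hx) (abs_nonneg _) (norm_nonneg _)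
    have h6 := abs_le.mp h4
    linarith [h1.2, h6.1]
  -- reduce to a quadratic-form inequality over unit vectors
  rw [← sub_nonneg]
  refine aux_unit_pos ((hYsa.add hθsa).sub hXsa) (fun x hx => ?_)
  show 0 ≤ qf (cfc f B + ϑ • 1 - X) x
  set t : ℝ := qf B x with htdef
  have htab : t ∈ Set.Icc a b :=
    ⟨by simpa [qf_alg hx] using qf_mono hB_lb x, by simpa [qf_alg hx] using qf_mono hB_ub x⟩
  have htJ : t ∈ J := hIcc htab
  -- upper chain for `X`
  have hstep : ∀ i, cfc f (A i) ≤
      algebraMap ℝ _ (f t) + ((cfc f' (A i)) * (A i) - t • cfc f' (A i)) := by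
    intro i
    have hfS : ContinuousOn f (spectrum ℝ (A i)) := hfc.mono (hAspec i)
    have hf'S : ContinuousOn f' (spectrum ℝ (A i)) := hf'cont.mono (hAspec i)
    have hmulS : ContinuousOn (fun s => f' s * s) (spectrum ℝ (A i)) :=
      hf'S.mul continuousOn_id
    have hcmS : ContinuousOn (fun s => t * f' s) (spectrum ℝ (A i)) :=
      continuousOn_const.mul hf'S
    have hsubS : ContinuousOn (fun s => f' s * s - t * f' s) (spectrum ℝ (A i)) :=
      hmulS.sub hcmS
    have hgS : ContinuousOn (fun s => f t + (f' s * s - t * f' s)) (spectrum ℝ (A i)) :=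
      continuousOn_const.add hsubS
    have hmono : cfc f (A i) ≤ cfc (fun s => f t + (f' s * s - t * f' s)) (A i) := by
      refine cfc_mono (fun s hs => ?_) hfS hgS
      have := aux_tangent hconv hderiv (hAspec i hs) htJ
      nlinarith [this]
    have hrw : cfc (fun s => f t + (f' s * s - t * f' s)) (A i)
        = algebraMap ℝ _ (f t) + ((cfc f' (A i)) * (A i) - t • cfc f' (A i)) := by
      rw [cfc_const_add (f t) (fun s => f' s * s - t * f' s) (A i) hsubS (hA i)]
      congr 1
      rw [cfc_sub (fun s => f' s * s) (fun s => t * f' s) (A i) hmulS hcmS]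
      congr 1
      · have hid : ContinuousOn (fun s : ℝ => s) (spectrum ℝ (A i)) := continuousOn_id
        rw [cfc_mul f' (fun s => s) (A i) hf'S hid, cfc_id' ℝ (A i) (hA i)]
      · exact cfc_const_mul t f' (A i) hf'S
    rw [← hrw]
    exact hmono
  have hchain1 : X ≤ algebraMap ℝ _ (f t) + (C - t • D) := by
    calc X ≤ ∑ i, Φ i (algebraMap ℝ _ (f t) + ((cfc f' (A i)) * (A i) - t • cfc f' (A i))) :=
          Finset.sum_le_sum fun i _ => aux_pos_mono (Φ i) (hΦpos i) (hstep i)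
      _ = algebraMap ℝ _ (f t) + (C - t • D) := by
          rw [Finset.sum_congr rfl fun i _ => by
            rw [map_add, map_sub, hΦsmul i t (cfc f' (A i))]]
          rw [Finset.sum_add_distrib, Finset.sum_sub_distrib, hsumalg, ← Finset.smul_sum,
            algebraMap_smul]
  -- lower chain for `cfc f B`
  have hchain2 : algebraMap ℝ _ (f t - f' t * t) + f' t • B ≤ cfc f B := by
    have hcmB : ContinuousOn (fun s => f' t * s) (spectrum ℝ B) :=
      continuousOn_const.mul continuousOn_id
    have hgS : ContinuousOn (fun s => (f t - f' t * t) + f' t * s) (spectrum ℝ B) :=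
      continuousOn_const.add hcmB
    have hrw : cfc (fun s => (f t - f' t * t) + f' t * s) B
        = algebraMap ℝ _ (f t - f' t * t) + f' t • B := by
      rw [cfc_const_add (f t - f' t * t) (fun s => f' t * s) B hcmB hBsa]
      congr 1
      exact cfc_const_mul_id (f' t) B hBsa
    rw [← hrw]
    refine cfc_mono (fun s hs => ?_) hgS (hfc.mono hBspecJ)
    have := aux_tangent hconv hderiv htJ (hBspecJ hs)
    nlinarith [this]
  -- evaluate everything at `x`
  have e1 : qf X x ≤ f t + (qf C x - t * qf D x) := by
    have h := qf_mono hchain1 x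
    rwa [qf_add, qf_sub, qf_alg hx, qf_smul] at h
  have e2 : qf C x - qf D x * t ≤ ϑ := by
    rw [hϑ]
    exact le_csSup hbdd ⟨x, hx, rfl⟩
  have e3 : f t ≤ qf (cfc f B) x := by
    have h := qf_mono hchain2 x
    rw [qf_add, qf_alg hx, qf_smul, ← htdef] at h
    linarith [h]
  rw [qf_sub, qf_add, qf_smul, qf_one hx]
  nlinarith [e1, e2, e3]
end
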